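/- arXiv:2405.19830 — 3 statements merged into one kernel-verified Lean document; each statement's English description precedes it below -/
import Mathlib

section
/- Let L' be a first-order language and let I be an infinite, locally finite L'-structure. Suppose that for every first-order language L, every L-structure M, and every I-indexed sequence (a_i)_{i∈I} of elements of M, there exist an L-structure N and an I-indexed sequence (b_i)_{i∈I} of elements of N which is I-indexed indiscernible and locally based on (a_i)_{i∈I}. Then Age(I) has the embedding Ramsey property. -/
open FirstOrder Language

universe u v w

/-- A bundled `L`-structure. -/
structure BStruct (L : FirstOrder.Language.{u, v}) where
  carrier : Type w
  [str : L.Structure carrier]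

attribute [instance] BStruct.str

/-- A class `C` of bundled `L'`-structures has the embedding Ramsey property (ERP). -/
def HasERP {L' : FirstOrder.Language.{u, v}} (C : Set (BStruct.{u, v, w} L')) : Prop :=
  ∀ A ∈ C, ∀ B ∈ C, Nonempty (A.carrier ↪[L'] B.carrier) →
    ∀ r : ℕ, ∃ D ∈ C,
      ∀ χ : (A.carrier ↪[L'] D.carrier) → Fin r,
        ∃ f : B.carrier ↪[L'] D.carrier,
          ∀ e₁ e₂ : A.carrier ↪[L'] B.carrier, χ (f.comp e₁) = χ (f.comp e₂)

/-- The age of an `L'`-structure `I`: the class of finitely generated structures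
that embed into `I`. -/
def Age (L' : FirstOrder.Language.{u, v}) (I : Type w) [L'.Structure I] : Set (BStruct.{u, v, w} L') :=
  { A | Structure.FG L' A.carrier ∧ Nonempty (A.carrier ↪[L'] I) }

/-- Two tuples (possibly from different `L'`-structures) have the same quantifier-free type. -/
def EqQFType (L' : FirstOrder.Language.{u, v}) {I : Type*} {J : Type*} [L'.Structure I] [L'.Structure J]
    {k : ℕ} (x : Fin k → I) (y : Fin k → J) : Prop :=
  ∀ φ : L'.Formula (Fin k), BoundedFormula.IsQF φ → (φ.Realize x ↔ φ.Realize y)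

/-- An `I`-indexed sequence of elements of an `L`-structure is `I`-indexed indiscernible. -/
def IsIndexedIndiscernible1 (L' : FirstOrder.Language.{u, v}) (L : FirstOrder.Language.{x, y})
    {I : Type*} [L'.Structure I] {M : Type*} [L.Structure M]
    (a : I → M) : Prop :=
  ∀ (k : ℕ) (i j : Fin k → I), EqQFType L' i j →
    ∀ φ : L.Formula (Fin k),
      ((φ.Realize fun m => a (i m)) ↔ (φ.Realize fun m => a (j m)))

/-- The sequence `b` (indexed by `J`, elements of `N`) is locally based on the sequence `a`
(indexed by `I`, elements of `M`). -/
def LocallyBasedOn1 (L' : FirstOrder.Language.{u, v}) (L : FirstOrder.Language.{x, y})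
    {I J : Type*} [L'.Structure I] [L'.Structure J]
    {M N : Type*} [L.Structure M] [L.Structure N]
    (a : I → M) (b : J → N) : Prop :=
  ∀ (k : ℕ) (Δ : Finset (L.Formula (Fin k))) (j : Fin k → J),
    ∃ i : Fin k → I, EqQFType L' j i ∧
      ∀ φ ∈ Δ, ((φ.Realize fun m => b (j m)) ↔ (φ.Realize fun m => a (i m)))

section ERPAux

variable {L' : FirstOrder.Language.{u, v}}

theorem eqQFType_trans {M N P : Type*} [L'.Structure M] [L'.Structure N] [L'.Structure P]
    {k : ℕ} {x : Fin k → M} {y : Fin k → N} {z : Fin k → P}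
    (h₁ : EqQFType L' x y) (h₂ : EqQFType L' y z) : EqQFType L' x z :=
  fun φ hφ => (h₁ φ hφ).trans (h₂ φ hφ)

theorem eqQFType_symm {M N : Type*} [L'.Structure M] [L'.Structure N]
    {k : ℕ} {x : Fin k → M} {y : Fin k → N}
    (h : EqQFType L' x y) : EqQFType L' y x :=
  fun φ hφ => (h φ hφ).symm

theorem embedding_realize_qf {M N : Type*} [L'.Structure M] [L'.Structure N] (g : M ↪[L'] N)
    {α : Type*} {l : ℕ} {φ : L'.BoundedFormula α l} (h : φ.IsQF) :
    ∀ (v : α → M) (xs : Fin l → M),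
      (φ.Realize (g ∘ v) (g ∘ xs) ↔ φ.Realize v xs) := by
  induction h with
  | falsum => intro v xs; exact Iff.rfl
  | of_isAtomic h =>
    intro v xs
    cases h with
    | equal t₁ t₂ =>
      simp only [BoundedFormula.realize_bdEqual, ← Sum.comp_elim, HomClass.realize_term]
      exact g.injective.eq_iff
    | rel R ts =>
      simp only [BoundedFormula.realize_rel, ← Sum.comp_elim, HomClass.realize_term]
      exact g.map_rel R _
  | imp _ _ ih₁ ih₂ =>
    intro v xs
    simp only [BoundedFormula.realize_imp, ih₁ v xs, ih₂ v xs]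

theorem embedding_eqQFType {M N : Type*} [L'.Structure M] [L'.Structure N] (g : M ↪[L'] N)
    {k : ℕ} (x : Fin k → M) : EqQFType L' x (g ∘ x) := by
  intro φ hφ
  have := embedding_realize_qf g hφ x default
  rw [Formula.Realize, Formula.Realize, ← this, Subsingleton.elim (g ∘ default) default]

/-- From same qf type with a surjective enumeration, build an embedding. -/
theorem exists_embedding_of_eqQFType {M N : Type*} [L'.Structure M] [L'.Structure N]
    {m : ℕ} {x : Fin m → M} (hx : Function.Surjective x) {y : Fin m → N}
    (h : EqQFType L' x y) : ∃ f : M ↪[L'] N, ∀ k, f (x k) = y k := by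
  classical
  have heq : ∀ k l : Fin m, x k = x l ↔ y k = y l := by
    intro k l
    have := h (Term.equal (Term.var k) (Term.var l))
      ((BoundedFormula.IsAtomic.equal _ _).isQF)
    simpa using this
  set s : M → Fin m := Function.surjInv hx with hs
  have hxs : ∀ p, x (s p) = p := fun p => Function.surjInv_eq hx p
  set f : M → N := fun p => y (s p) with hf
  have hfx : ∀ k, f (x k) = y k := by
    intro k
    exact (heq (s (x k)) k).1 (hxs (x k))
  refine ⟨⟨⟨f, ?_⟩, ?_, ?_⟩, hfx⟩
  · intro p q hpq
    obtain ⟨k, rfl⟩ := hx p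
    obtain ⟨l, rfl⟩ := hx q
    rw [hfx, hfx] at hpq
    exact (heq k l).2 hpq
  · intro q F vv
    obtain ⟨kv, hkv⟩ : ∃ kv : Fin q → Fin m, ∀ j, x (kv j) = vv j :=
      ⟨fun j => s (vv j), fun j => hxs (vv j)⟩
    obtain ⟨k₀, hk₀⟩ : ∃ k₀, x k₀ = Structure.funMap F vv := hx _
    have := h (Term.equal (Term.func F fun j => Term.var (kv j)) (Term.var k₀))
      ((BoundedFormula.IsAtomic.equal _ _).isQF)
    simp only [Formula.realize_equal, Term.realize_func, Term.realize_var] at this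
    have hy : Structure.funMap F (fun j => y (kv j)) = y k₀ := by
      refine this.1 ?_
      rw [hk₀]
      exact congrArg (Structure.funMap F) (funext hkv)
    have h1 : (fun j => f (vv j)) = fun j => y (kv j) := by
      funext j; rw [← hkv j, hfx]
    show f (Structure.funMap F vv) = Structure.funMap F (f ∘ vv)
    rw [show f ∘ vv = fun j => f (vv j) from rfl, h1, hy, ← hk₀, hfx]
  · intro q R vv
    obtain ⟨kv, hkv⟩ : ∃ kv : Fin q → Fin m, ∀ j, x (kv j) = vv j :=
      ⟨fun j => s (vv j), fun j => hxs (vv j)⟩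
    have := h (Relations.formula R fun j => Term.var (kv j))
      ((BoundedFormula.IsAtomic.rel _ _).isQF)
    simp only [Formula.realize_rel, Term.realize_var] at this
    have h1 : (fun j => f (vv j)) = fun j => y (kv j) := by
      funext j; rw [← hkv j, hfx]
    show Structure.RelMap R (f ∘ vv) ↔ Structure.RelMap R vv
    rw [show f ∘ vv = fun j => f (vv j) from rfl, h1, ← funext hkv]
    exact this.symm

end ERPAux

/-- If `I` is an infinite, locally finite `L'`-structure such that for every
language `L`, every `L`-structure `M`, and every `I`-indexed sequence of elements of `M` there
is an `I`-indexed indiscernible sequence (in some `L`-structure `N`) locally based on it,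
then the age of `I` has the embedding Ramsey property. -/
theorem modeling_implies_erp {L' : FirstOrder.Language.{u, v}} {I : Type w} [L'.Structure I]
    (hinf : Infinite I)
    (hlf : ∀ S : L'.Substructure I, S.FG → Finite S)
    (hMP : ∀ (L : FirstOrder.Language.{max u v w, max u v w}) (M : Type (max u v w))
      [L.Structure M] (a : I → M),
      ∃ (N : BStruct.{max u v w, max u v w, max u v w} L) (b : I → N.carrier),
        IsIndexedIndiscernible1 L' L b ∧ LocallyBasedOn1 L' L a b) :
    HasERP (Age L' I) := by
  classical
  rintro A ⟨hAfg, hAI⟩ B ⟨hBfg, hBI⟩ hAB r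
  -- carriers of Age members are finite
  have hfin : ∀ (X : BStruct.{u, v, w} L'), Structure.FG L' X.carrier →
      (X.carrier ↪[L'] I) → Finite X.carrier := by
    intro X hfg ι
    have h1 : ((⊤ : L'.Substructure X.carrier).map ι.toHom).FG :=
      (Structure.fg_def.mp hfg).map ι.toHom
    have h2 : Finite ((⊤ : L'.Substructure X.carrier).map ι.toHom) := hlf _ h1
    refine Finite.of_injective
      (fun p => (⟨ι p, Substructure.mem_map.mpr ⟨p, Substructure.mem_top p, rfl⟩⟩ :
        ((⊤ : L'.Substructure X.carrier).map ι.toHom))) ?_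
    intro p q hpq
    exact ι.injective (congrArg Subtype.val hpq)
  have finA : Finite A.carrier := hfin A hAfg hAI.some
  have finB : Finite B.carrier := hfin B hBfg hBI.some
  -- trivial case r = 0
  rcases Nat.eq_zero_or_pos r with rfl | hr
  · exact ⟨B, ⟨hBfg, hBI⟩, fun χ => (χ hAB.some).elim0⟩
  by_contra hno
  push_neg at hno
  -- the directed set of finitely generated substructures of I
  let J := {S : L'.Substructure I // S.FG}
  haveI : Nonempty J :=
    ⟨⟨Substructure.closure L' (∅ : Set I), Substructure.fg_closure Set.finite_empty⟩⟩
  haveI : IsDirected J (· ≤ ·) :=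
    ⟨fun C D => ⟨⟨C.1 ⊔ D.1, C.2.sup D.2⟩, Subtype.coe_le_coe.mp le_sup_left,
      Subtype.coe_le_coe.mp le_sup_right⟩⟩
  -- bad colorings on each finitely generated substructure
  have hbad : ∀ C : J, ∃ χ : (A.carrier ↪[L'] C.1) → Fin r,
      ∀ f : B.carrier ↪[L'] C.1, ∃ e₁ e₂ : A.carrier ↪[L'] B.carrier,
        χ (f.comp e₁) ≠ χ (f.comp e₂) := by
    intro C
    exact hno (BStruct.mk (L := L') C.1)
      ⟨(Substructure.fg_iff_structure_fg C.1).mp C.2, ⟨C.1.subtype⟩⟩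
  choose χC hχC using hbad
  -- an ultrafilter refining the filter at infinity on J
  let U : Ultrafilter J := Ultrafilter.of Filter.atTop
  have hU : ∀ C : J, {D : J | C ≤ D} ∈ U := fun C =>
    Ultrafilter.of_le Filter.atTop (Filter.mem_atTop C)
  -- sets deciding the ultrafilter color of an embedding A ↪ I
  let T : (A.carrier ↪[L'] I) → Fin r → Set J := fun h c =>
    {C | ∀ hr : ∀ p, h p ∈ C.1, χC C (h.codRestrict C.1 hr) = c}
  have hTex : ∀ h : A.carrier ↪[L'] I, ∃ c, T h c ∈ U := by
    intro h
    have hmem : ({D : J | (⟨Substructure.closure L' (Set.range h),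
        Substructure.fg_closure (Set.finite_range h)⟩ : J) ≤ D} : Set J) ∈ U :=
      hU _
    have hsub : {D : J | (⟨Substructure.closure L' (Set.range h),
        Substructure.fg_closure (Set.finite_range h)⟩ : J) ≤ D} ⊆ ⋃ c : Fin r, T h c := by
      intro C hC
      have hr : ∀ p, h p ∈ C.1 := fun p => hC (Substructure.subset_closure ⟨p, rfl⟩)
      exact Set.mem_iUnion.mpr ⟨χC C (h.codRestrict C.1 hr), fun hr' => rfl⟩
    have hun : (⋃ c : Fin r, T h c) ∈ U := Filter.mem_of_superset hmem hsub
    rw [← Set.biUnion_univ] at hun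
    obtain ⟨c, _, hc⟩ := (Ultrafilter.finite_biUnion_mem_iff Set.finite_univ).mp hun
    exact ⟨c, hc⟩
  choose χ hχ using hTex
  -- enumerations of A and B
  obtain ⟨n, ⟨eA⟩⟩ := Finite.exists_equiv_fin A.carrier
  obtain ⟨m, ⟨eB⟩⟩ := Finite.exists_equiv_fin B.carrier
  let abar : Fin n → A.carrier := eA.symm
  let bbar : Fin m → B.carrier := eB.symm
  -- the auxiliary language and structure on (a lift of) I
  let L : FirstOrder.Language.{max u v w, max u v w} :=
    ⟨fun _ => PEmpty, fun _ => ULift.{max u v w} (Fin r)⟩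
  let MI := ULift.{max u v} I
  letI : L.Structure MI :=
    ⟨fun F _ => PEmpty.elim F,
     fun {k} c xv => ∃ h : A.carrier ↪[L'] I, χ h = c.down ∧
       ∀ (p : Fin k) (p' : Fin n), (p : ℕ) = (p' : ℕ) → xv p = ULift.up (h (abar p'))⟩
  have relmap_emb : ∀ (c : Fin r) (h' : A.carrier ↪[L'] I),
      (Structure.RelMap (L := L) (M := MI) (ULift.up c : L.Relations n)
        (fun p : Fin n => ULift.up (h' (abar p))) ↔ χ h' = c) := by
    intro c h'
    constructor
    · rintro ⟨h, hc, hagree⟩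
      have hhh : h = h' := by
        refine Embedding.ext fun p => ?_
        obtain ⟨k, rfl⟩ := (eA.symm.surjective : Function.Surjective abar) p
        exact (ULift.up_injective (hagree k k rfl)).symm
      rw [← hhh]; exact hc
    · intro hc
      refine ⟨h', hc, ?_⟩
      intro p p' hpp'
      have : p = p' := Fin.ext hpp'
      rw [this]
  obtain ⟨N, b, hind, hbase⟩ := hMP L MI (fun i => ULift.up i)
  -- the atomic color formulas
  let ψ : Fin r → L.Formula (Fin n) := fun c =>
    Relations.formula (ULift.up c : L.Relations n) (fun p => Term.var p)
  have realize_psi : ∀ (c : Fin r) (vv : Fin n → MI),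
      ((ψ c).Realize vv ↔ Structure.RelMap (L := L) (M := MI) (ULift.up c : L.Relations n) vv) := by
    intro c vv
    rw [Formula.realize_rel]
    exact Iff.rfl
  -- every embedded copy of abar has the qf type of abar
  have habar_type : ∀ h : A.carrier ↪[L'] I, EqQFType L' abar (h ∘ abar) :=
    fun h => embedding_eqQFType h abar
  obtain ⟨h₀⟩ := hAI
  -- apply local basing at the copy h₀ ∘ abar with the color formulas
  obtain ⟨i0, hty0, hmatch0⟩ := hbase n (Set.Finite.toFinset (Set.finite_range ψ))
    (fun k => h₀ (abar k))
  have hty0' : EqQFType L' abar i0 := eqQFType_trans (habar_type h₀) hty0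
  obtain ⟨h', hh'⟩ := exists_embedding_of_eqQFType
    (eA.symm.surjective : Function.Surjective abar) hty0'
  -- the uniform color c₀
  have key2 : ∀ c : Fin r, ((ψ c).Realize (fun k => b (h₀ (abar k))) ↔ χ h' = c) := by
    intro c
    have hm := hmatch0 (ψ c) (by
      rw [Set.Finite.mem_toFinset]; exact ⟨c, rfl⟩)
    rw [hm, realize_psi]
    have : (fun k => ULift.up.{max u v} (i0 k)) = fun p : Fin n => ULift.up (h' (abar p)) := by
      funext k; rw [hh' k]
    rw [show (fun k => (fun i => ULift.up.{max u v} i) (i0 k)) = fun k => ULift.up (i0 k) from rfl,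
      this, relmap_emb]
  have key3 : ∀ (c : Fin r) (h : A.carrier ↪[L'] I),
      (((ψ c).Realize fun k => b (h (abar k))) ↔ χ h' = c) := by
    intro c h
    have hty : EqQFType L' (fun k => h (abar k)) (fun k => h₀ (abar k)) :=
      eqQFType_trans (eqQFType_symm (habar_type h)) (habar_type h₀)
    rw [hind n _ _ hty (ψ c)]
    exact key2 c
  -- now apply local basing at a copy of B
  obtain ⟨g₀⟩ := hBI
  haveI : Finite (A.carrier ↪[L'] B.carrier) :=
    Finite.of_injective (fun e => (e : A.carrier → B.carrier)) DFunLike.coe_injective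
  let σ : (A.carrier ↪[L'] B.carrier) → Fin n → Fin m := fun e k => eB (e (abar k))
  have hbbar_sigma : ∀ e k, bbar (σ e k) = e (abar k) := by
    intro e k; exact eB.symm_apply_apply _
  let φf : (A.carrier ↪[L'] B.carrier) × Fin r → L.Formula (Fin m) := fun ec =>
    Relations.formula (ULift.up ec.2 : L.Relations n) (fun k => Term.var (σ ec.1 k))
  have realize_phif : ∀ (e : A.carrier ↪[L'] B.carrier) (c : Fin r) (vv : Fin m → MI),
      ((φf (e, c)).Realize vv ↔
        Structure.RelMap (L := L) (M := MI) (ULift.up c : L.Relations n) (fun k => vv (σ e k))) := by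
    intro e c vv
    rw [Formula.realize_rel]
    exact Iff.rfl
  have realize_phifN : ∀ (e : A.carrier ↪[L'] B.carrier) (c : Fin r) (vv : Fin m → N.carrier),
      ((φf (e, c)).Realize vv ↔ (ψ c).Realize (fun k => vv (σ e k))) := by
    intro e c vv
    rw [Formula.realize_rel, Formula.realize_rel]
    exact Iff.rfl
  obtain ⟨ii, hty, hmatch⟩ := hbase m (Set.Finite.toFinset (Set.finite_range φf))
    (fun k => g₀ (bbar k))
  have htyB : EqQFType L' bbar ii := eqQFType_trans (embedding_eqQFType g₀ bbar) hty
  obtain ⟨f, hf⟩ := exists_embedding_of_eqQFType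
    (eB.symm.surjective : Function.Surjective bbar) htyB
  -- f is monochromatic for χ
  have hmono : ∀ e : A.carrier ↪[L'] B.carrier, χ (f.comp e) = χ h' := by
    intro e
    set c : Fin r := χ (f.comp e) with hcdef
    have hm := hmatch (φf (e, c)) (by
      rw [Set.Finite.mem_toFinset]; exact ⟨(e, c), rfl⟩)
    have hRHS : (φf (e, c)).Realize (fun k => (fun i => ULift.up.{max u v} i) (ii k)) := by
      rw [realize_phif]
      have : (fun k => ULift.up.{max u v} (ii (σ e k))) =
          fun p : Fin n => ULift.up ((f.comp e) (abar p)) := by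
        funext k
        rw [← hf (σ e k)]
        exact congrArg (fun z => ULift.up.{max u v} (f z)) (hbbar_sigma e k)
      rw [show (fun k => (fun i => ULift.up.{max u v} i) (ii (σ e k))) =
        fun k => ULift.up (ii (σ e k)) from rfl, this, relmap_emb]
    have hLHS := hm.mpr hRHS
    rw [realize_phifN] at hLHS
    have hcomp : (fun k => b (g₀ (bbar (σ e k)))) = fun k => b ((g₀.comp e) (abar k)) := by
      funext k; rw [hbbar_sigma]; rfl
    rw [show (fun k => (fun j => b (g₀ (bbar j))) (σ e k)) =
      fun k => b (g₀ (bbar (σ e k))) from rfl, hcomp] at hLHS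
    exact ((key3 c (g₀.comp e)).mp hLHS).symm
  -- the final contradiction inside a large enough finitely generated substructure
  set c₀ := χ h' with hc₀
  let Cstar : J := ⟨(⊤ : L'.Substructure B.carrier).map f.toHom,
    (Structure.fg_def.mp hBfg).map f.toHom⟩
  have hG : ((⋂ e : A.carrier ↪[L'] B.carrier, T (f.comp e) c₀) ∩ {D : J | Cstar ≤ D}) ∈ U := by
    refine Filter.inter_mem (Filter.iInter_mem.mpr fun e => ?_) (hU Cstar)
    rw [← hmono e]
    exact hχ (f.comp e)
  obtain ⟨C, hC1, hC2⟩ := Ultrafilter.nonempty_of_mem hG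
  have hrB : ∀ p, f p ∈ C.1 := fun p =>
    hC2 (Substructure.mem_map.mpr ⟨p, Substructure.mem_top p, rfl⟩)
  let F : B.carrier ↪[L'] C.1 := f.codRestrict C.1 hrB
  have hFcol : ∀ e : A.carrier ↪[L'] B.carrier, χC C (F.comp e) = c₀ := by
    intro e
    have hre : ∀ p, (f.comp e) p ∈ C.1 := fun p => hrB (e p)
    have hmem := Set.mem_iInter.mp hC1 e
    have heq : F.comp e = (f.comp e).codRestrict C.1 hre :=
      Embedding.ext fun p => rfl
    rw [heq]
    exact hmem hre
  obtain ⟨e₁, e₂, hne⟩ := hχC C F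
  exact hne ((hFcol e₁).trans (hFcol e₂).symm)
end

section
/- Let n ≥ 1, let L be a first-order language, M an L-structure, and let φ(x; y_0,…,y_{n-1}) be an L-formula with IP_n in M. Then φ, regarded as a formula in the n+1 variable groups (x, y_0,…,y_{n-1}), encodes every finite (n+1)-partite (n+1)-uniform hypergraph in M, where part P_0 is plugged into the group x and part P_{i+1} into the group y_i for i < n. -/
open FirstOrder Language

universe u x y z

/-- An `(n+1)`-partite `(n+1)`-uniform hypergraph, presented by its parts `P 0, …, P n` and
its set `E` of edges, each edge containing exactly one vertex of each part (given in order). -/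
structure PartiteHG (n : ℕ) : Type (u + 1) where
  P : Fin (n + 1) → Type u
  E : (∀ i, P i) → Prop

/-- The formula `φ(x; y₀, …, y_{n-1})`, with variable groups `x` of length `d₀` and `y i` of
length `d i`, has the `n`-independence property (IPₙ) in `M`: there is an array
`(a 0 i, …, a (n-1) i)_{i < ω}` such that for every finite `w ⊆ ω^n` there is `b` with
`M ⊨ φ(b, a 0 i₀, …, a (n-1) i_{n-1})` iff `(i₀, …, i_{n-1}) ∈ w`. -/
def HasIPn (L : FirstOrder.Language.{x, y}) (M : Type z) [L.Structure M] {n d₀ : ℕ}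
    {d : Fin n → ℕ} (φ : L.Formula (Fin d₀ ⊕ (Σ i : Fin n, Fin (d i)))) : Prop :=
  ∃ a : (i : Fin n) → ℕ → Fin (d i) → M,
    ∀ w : Finset (Fin n → ℕ), ∃ b : Fin d₀ → M,
      ∀ idx : Fin n → ℕ,
        ((φ.Realize (Sum.elim b fun p => a p.1 (idx p.1) p.2)) ↔ idx ∈ w)

/-- The formula `φ(x; y₀, …, y_{n-1})` encodes the `(n+1)`-partite `(n+1)`-uniform hypergraph
`H` in `M`, with part `P 0` plugged into the group `x` and part `P (i+1)` into the group `y i`: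
there is an `H`-indexed sequence of tuples of `M` such that a cross tuple satisfies `φ` iff it
is an edge. -/
def EncodesP (L : FirstOrder.Language.{x, y}) (M : Type z) [L.Structure M] {n d₀ : ℕ}
    {d : Fin n → ℕ} (φ : L.Formula (Fin d₀ ⊕ (Σ i : Fin n, Fin (d i))))
    (H : PartiteHG.{u} n) : Prop :=
  ∃ (a₀ : H.P 0 → Fin d₀ → M) (a : (i : Fin n) → H.P i.succ → Fin (d i) → M),
    ∀ g : ∀ i, H.P i,
      ((φ.Realize (Sum.elim (a₀ (g 0)) fun p => a p.1 (g p.1.succ) p.2)) ↔ H.E g)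

/-- If `φ(x; y₀, …, y_{n-1})` has IPₙ in `M` (`n ≥ 1`), then `φ` encodes every
finite `(n+1)`-partite `(n+1)`-uniform hypergraph in `M`. -/
theorem ipn_implies_encodes_partite {n : ℕ} (hn : 1 ≤ n)
    (L : FirstOrder.Language.{x, y}) (M : Type z) [L.Structure M]
    {d₀ : ℕ} {d : Fin n → ℕ} (φ : L.Formula (Fin d₀ ⊕ (Σ i : Fin n, Fin (d i))))
    (hIP : HasIPn L M φ) :
    ∀ H : PartiteHG.{u} n, (∀ i, Finite (H.P i)) → EncodesP L M φ H := by

  intro H hfin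
  obtain ⟨a, ha⟩ := hIP
  have he : ∀ i : Fin n, ∃ e : H.P i.succ → ℕ, Function.Injective e := by
    intro i
    have := hfin i.succ
    exact Countable.exists_injective_nat _
  choose e hei using he
  have hWfin : ∀ g0 : H.P 0,
      ((fun h : ∀ i : Fin n, H.P i.succ => (fun i => e i (h i))) ''
        {h | H.E (Fin.cases g0 h)}).Finite := by
    intro g0
    have : Finite (∀ i : Fin n, H.P i.succ) := by
      have := fun i : Fin n => hfin i.succ
      infer_instance
    exact (Set.toFinite _).image _
  choose b hb using fun g0 : H.P 0 => ha (hWfin g0).toFinset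
  refine ⟨b, fun i h => a i (e i h), fun g => ?_⟩
  have hg : (Fin.cases (g 0) (fun i => g i.succ) : ∀ i, H.P i) = g := by
    funext i
    exact Fin.cases (motive := fun i => Fin.cases (g 0) (fun j => g j.succ) i = g i)
      rfl (fun j => rfl) i
  have hg2 : H.E (fun i => Fin.cases (g 0) (fun i => g i.succ) i) = H.E g :=
    congrArg H.E hg
  have := hb (g 0) (fun i => e i (g i.succ))
  rw [this, Set.Finite.mem_toFinset]
  constructor
  · rintro ⟨h, hE, hh⟩
    have hh2 : h = fun i : Fin n => g i.succ := by
      funext i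
      exact hei i (congrFun hh i)
    subst hh2
    exact cast hg2 hE
  · intro hE
    refine ⟨fun i => g i.succ, ?_, rfl⟩
    show H.E fun i => Fin.cases (g 0) (fun i => g i.succ) i
    exact cast hg2.symm hE
end

section
/- Let n ≥ 1, let L be a first-order language, M an L-structure, φ(y_0,…,y_{n-1},x) an L-formula with n+1 variable groups, let (I,<,R,P_0,…,P_n) be a random ordered (n+1)-partite (n+1)-uniform hypergraph, and suppose a sequence (a_g)_{g∈I} of tuples of M witnesses that φ encodes (I,R,P_0,…,P_n) in M (part P_i plugged into y_i for i < n and part P_n into x). Then the formula ψ_φ(z_0,…,z_n) := ⋁_{σ ∈ Sym({0,…,n})} φ(y^0_{σ(0)},…,y^{n-1}_{σ(n-1)}, x_{σ(n)}), where z_i = (y^0_i,…,y^{n-1}_i, x_i), encodes every finite (n+1)-uniform hypergraph in M. -/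
open FirstOrder Language

universe u u' x y z

/-- Insert a vertex `b` of part `j` into a choice of vertices for all other parts. -/
def insertPt {n : ℕ} {P : Fin (n + 1) → Type u} (j : Fin (n + 1)) (b : P j)
    (a : ∀ i, i ≠ j → P i) (i : Fin (n + 1)) : P i :=
  if h : i = j then cast (congrArg P h.symm) b else a i h

/-- A random ordered `(n+1)`-partite `(n+1)`-uniform hypergraph. -/
structure RandomOrderedPartiteHG (n : ℕ) extends PartiteHG.{u} n where
  lt : ∀ i, P i → P i → Prop
  strictTotal : ∀ i, IsStrictTotalOrder (P i) (lt i)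
  dense : ∀ (i) (x y : P i), lt i x y → ∃ z, lt i x z ∧ lt i z y
  noMax : ∀ (i) (x : P i), ∃ y, lt i x y
  noMin : ∀ (i) (x : P i), ∃ y, lt i y x
  nonempty : ∀ i, Nonempty (P i)
  random : ∀ (j : Fin (n + 1)) (A₀ A₁ : Set (∀ i, i ≠ j → P i)),
    A₀.Finite → A₁.Finite → Disjoint A₀ A₁ →
    ∀ b₀ b₁ : P j, lt j b₀ b₁ →
      ∃ b : P j, lt j b₀ b ∧ lt j b b₁ ∧
        (∀ a ∈ A₀, E (insertPt j b a)) ∧ (∀ a ∈ A₁, ¬ E (insertPt j b a))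

/-- An `(n+1)`-uniform hypergraph: a symmetric `(n+1)`-ary relation holding only on tuples of
pairwise distinct elements. -/
structure UniformHG (n : ℕ) : Type (u + 1) where
  G : Type u
  R : (Fin (n + 1) → G) → Prop
  symm : ∀ (v : Fin (n + 1) → G) (σ : Equiv.Perm (Fin (n + 1))), R v → R (v ∘ σ)
  distinct : ∀ v, R v → Function.Injective v

/-- Finite disjunction of a list of formulas. -/
def bigOr {L : FirstOrder.Language.{x, y}} {α : Type*} : List (L.Formula α) → L.Formula α
  | [] => BoundedFormula.falsum
  | χ :: l => χ.not.imp (bigOr l)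

/-- The relabeling of the variables of `φ(y₀, …, y_{n-1}, x)` corresponding to the substitution
`φ(y⁰_{σ 0}, …, y^{n-1}_{σ (n-1)}, x_{σ n})`, where `z i = (y⁰_i, …, y^{n-1}_i, x_i)` is the
`i`-th of the `n+1` new variable groups. -/
def groupMap {n d₀ : ℕ} {d : Fin n → ℕ} (σ : Equiv.Perm (Fin (n + 1))) :
    ((Σ j : Fin n, Fin (d j)) ⊕ Fin d₀) →
      Fin (n + 1) × ((Σ j : Fin n, Fin (d j)) ⊕ Fin d₀)
  | Sum.inl p => (σ p.1.castSucc, Sum.inl p)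
  | Sum.inr k => (σ (Fin.last n), Sum.inr k)

/-- The formula `φ_σ(z₀, …, z_n) = φ(y⁰_{σ 0}, …, y^{n-1}_{σ (n-1)}, x_{σ n})`. -/
def phiSigma {L : FirstOrder.Language.{x, y}} {n d₀ : ℕ} {d : Fin n → ℕ}
    (φ : L.Formula ((Σ j : Fin n, Fin (d j)) ⊕ Fin d₀)) (σ : Equiv.Perm (Fin (n + 1))) :
    L.Formula (Fin (n + 1) × ((Σ j : Fin n, Fin (d j)) ⊕ Fin d₀)) :=
  Formula.relabel (groupMap σ) φ

/-- The symmetrization `ψ_φ(z₀, …, z_n) = ⋁_{σ ∈ Sym(n+1)} φ_σ(z₀, …, z_n)`. -/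
noncomputable def psiPhi {L : FirstOrder.Language.{x, y}} {n d₀ : ℕ} {d : Fin n → ℕ}
    (φ : L.Formula ((Σ j : Fin n, Fin (d j)) ⊕ Fin d₀)) :
    L.Formula (Fin (n + 1) × ((Σ j : Fin n, Fin (d j)) ⊕ Fin d₀)) :=
  bigOr (((Finset.univ : Finset (Equiv.Perm (Fin (n + 1)))).toList).map (phiSigma φ))

/-! The random property lets one place, one at a time, a copy `c (i, g)` in part `i` of every
vertex `g` of a finite hypergraph, so that a cross tuple of copies is an edge of the random
hypergraph exactly when the underlying vertices form an edge; each new copy is chosen above all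
earlier ones in its part, so that distinct vertices get distinct copies and the edge conditions
imposed on it are consistent. Plugging the copies of `g` into `φ` part by part gives `b_g`, and
`ψ_φ(b_{h₀}, …, b_{hₙ})` then holds iff some permutation of `(h₀, …, hₙ)` is an edge, i.e. iff
`(h₀, …, hₙ)` is one. -/

theorem directed_id_of_forall_exists_rel {α : Type*} {r : α → α → Prop} [IsTrans α r]
    [Std.Trichotomous r] (h : ∀ x, ∃ y, r x y) : Directed r id := by
  intro x y
  rcases trichotomous_of r x y with hxy | rfl | hyx
  · obtain ⟨z, hyz⟩ := h y
    exact ⟨z, _root_.trans hxy hyz, hyz⟩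
  · obtain ⟨z, hxz⟩ := h x
    exact ⟨z, hxz, hxz⟩
  · obtain ⟨z, hxz⟩ := h x
    exact ⟨z, hxz, _root_.trans hyx hxz⟩

theorem insertPt_eq_self {n : ℕ} {P : Fin (n + 1) → Type u} (j : Fin (n + 1)) (f : ∀ i, P i) :
    insertPt j (f j) (fun i _ => f i) = f := by
  funext i
  unfold insertPt
  split_ifs with h
  · subst h; rfl
  · rfl

namespace PartiteHG

variable {n : ℕ} (H : PartiteHG.{u} n) {V : Type*} (R : (Fin (n + 1) → V) → Prop)

/-- `c (i, g)` is the copy in part `i` of the vertex `g`; it is meaningful only for `(i, g) ∈ S`. -/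
structure IsPartialEmbedding (S : Finset (Fin (n + 1) × V)) (c : ∀ t : Fin (n + 1) × V, H.P t.1) :
    Prop where
  inj : ∀ {i g g'}, (i, g) ∈ S → (i, g') ∈ S → c (i, g) = c (i, g') → g = g'
  iff : ∀ v : Fin (n + 1) → V, (∀ j, (j, v j) ∈ S) → (H.E (fun j => c (j, v j)) ↔ R v)

theorem isPartialEmbedding_empty (c : ∀ t : Fin (n + 1) × V, H.P t.1) :
    H.IsPartialEmbedding R ∅ c :=
  ⟨fun h => absurd h (Finset.notMem_empty _), fun _ hv => absurd (hv 0) (Finset.notMem_empty _)⟩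

variable {H R} [DecidableEq V] {S : Finset (Fin (n + 1) × V)} {c : ∀ t : Fin (n + 1) × V, H.P t.1}
  {i : Fin (n + 1)} {g : V}

theorem IsPartialEmbedding.update (hc : H.IsPartialEmbedding R S c) (hig : (i, g) ∉ S) {b : H.P i}
    (hfresh : ∀ g', (i, g') ∈ S → c (i, g') ≠ b)
    (hb : ∀ v : Fin (n + 1) → V, v i = g → (∀ j, j ≠ i → (j, v j) ∈ S) →
      (H.E (insertPt i b fun j _ => c (j, v j)) ↔ R v)) :
    H.IsPartialEmbedding R (insert (i, g) S) (Function.update c (i, g) b) := by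
  have hold : ∀ {t}, t ∈ S → Function.update c (i, g) b t = c t := fun ht =>
    Function.update_of_ne (ne_of_mem_of_not_mem ht hig) _ _
  constructor
  · intro j g₁ g₂ h₁ h₂ heq
    rw [Finset.mem_insert] at h₁ h₂
    rcases h₁ with h₁ | h₁ <;> rcases h₂ with h₂ | h₂
    · exact (Prod.mk.inj h₁).2.trans (Prod.mk.inj h₂).2.symm
    · obtain ⟨rfl, rfl⟩ := Prod.mk.inj h₁
      rw [Function.update_self, hold h₂] at heq
      exact absurd heq.symm (hfresh g₂ h₂)
    · obtain ⟨rfl, rfl⟩ := Prod.mk.inj h₂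
      rw [Function.update_self, hold h₁] at heq
      exact absurd heq (hfresh g₁ h₁)
    · rw [hold h₁, hold h₂] at heq
      exact hc.inj h₁ h₂ heq
  · intro v hv
    by_cases hvi : v i = g
    · have hvS : ∀ j, j ≠ i → (j, v j) ∈ S := fun j hj =>
        (Finset.mem_insert.1 (hv j)).resolve_left fun h => hj (Prod.mk.inj h).1
      convert hb v hvi hvS using 2
      rw [← insertPt_eq_self i fun j => Function.update c (i, g) b (j, v j)]
      congr
      · rw [hvi, Function.update_self]
      · exact funext₂ fun j hj => hold (hvS j hj)
    · have hvS : ∀ j, (j, v j) ∈ S := fun j =>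
        (Finset.mem_insert.1 (hv j)).resolve_left fun h => by
          obtain ⟨rfl, hg⟩ := Prod.mk.inj h
          exact hvi hg
      simp only [hold (hvS _)]
      exact hc.iff v hvS

end PartiteHG

namespace RandomOrderedPartiteHG

variable {n : ℕ} (H : RandomOrderedPartiteHG.{u} n) {V : Type*} (R : (Fin (n + 1) → V) → Prop)

theorem exists_isPartialEmbedding_insert [Finite V] [DecidableEq V]
    {S : Finset (Fin (n + 1) × V)} {c : ∀ t : Fin (n + 1) × V, H.P t.1}
    (hc : H.IsPartialEmbedding R S c) {i : Fin (n + 1)} {g : V} (hig : (i, g) ∉ S) :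
    ∃ c', H.IsPartialEmbedding R (insert (i, g) S) c' := by
  have := H.strictTotal i
  have := H.nonempty i
  obtain ⟨b₀, hb₀⟩ := (directed_id_of_forall_exists_rel (H.noMax i)).finite_le
    fun g' : V => c (i, g')
  obtain ⟨b₁, hb₀₁⟩ := H.noMax i b₀
  let W : Set (Fin (n + 1) → V) := {v | v i = g ∧ ∀ j, j ≠ i → (j, v j) ∈ S}
  let trace (v : Fin (n + 1) → V) : ∀ j, j ≠ i → H.P j := fun j _ => c (j, v j)
  have hdisj : Disjoint (trace '' {v ∈ W | R v}) (trace '' {v ∈ W | ¬ R v}) := by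
    rw [Set.disjoint_left]
    rintro _ ⟨v, ⟨hv, hRv⟩, rfl⟩ ⟨v', ⟨hv', hRv'⟩, htrace⟩
    have hvv' : v' = v := funext fun j => by
      by_cases hj : j = i
      · subst hj
        exact hv'.1.trans hv.1.symm
      · exact hc.inj (hv'.2 j hj) (hv.2 j hj) (congrFun₂ htrace j hj)
    exact hRv' (hvv' ▸ hRv)
  obtain ⟨b, hb₀b, -, hA₀, hA₁⟩ := H.random i _ _ ((Set.toFinite _).image _)
    ((Set.toFinite _).image _) hdisj b₀ b₁ hb₀₁
  have hfresh : ∀ g', (i, g') ∈ S → c (i, g') ≠ b := fun g' _ hg' => asymm (hg' ▸ hb₀ g') hb₀b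
  refine ⟨_, hc.update hig hfresh fun v hvi hvS => ?_⟩
  exact ⟨fun hE => by_contra fun hR => hA₁ _ ⟨v, ⟨⟨hvi, hvS⟩, hR⟩, rfl⟩ hE,
    fun hR => hA₀ _ ⟨v, ⟨⟨hvi, hvS⟩, hR⟩, rfl⟩⟩

theorem exists_embedding [Finite V] :
    ∃ c : ∀ t : Fin (n + 1) × V, H.P t.1, ∀ v, H.E (fun j => c (j, v j)) ↔ R v := by
  classical
  have := Fintype.ofFinite V
  suffices ∀ S : Finset (Fin (n + 1) × V), ∃ c, H.IsPartialEmbedding R S c by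
    obtain ⟨c, hc⟩ := this Finset.univ
    exact ⟨c, fun v => hc.iff v fun j => Finset.mem_univ _⟩
  intro S
  induction S using Finset.induction_on with
  | empty => exact ⟨_, H.isPartialEmbedding_empty R fun t => Classical.choice (H.nonempty t.1)⟩
  | insert t S ht ih =>
    obtain ⟨c, hc⟩ := ih
    exact H.exists_isPartialEmbedding_insert R hc ht

end RandomOrderedPartiteHG

theorem UniformHG.exists_perm_comp_iff {n : ℕ} (G : UniformHG.{u'} n) (h : Fin (n + 1) → G.G) :
    (∃ σ : Equiv.Perm (Fin (n + 1)), G.R (h ∘ σ)) ↔ G.R h :=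
  ⟨fun ⟨σ, hσ⟩ => by simpa [Function.comp_assoc] using G.symm _ σ⁻¹ hσ, fun hR => ⟨1, hR⟩⟩

section Symmetrization

variable {L : FirstOrder.Language.{x, y}} {M : Type z} [L.Structure M]

theorem realize_bigOr {α : Type*} (l : List (L.Formula α)) (v : α → M) :
    (bigOr l).Realize v ↔ ∃ χ ∈ l, χ.Realize v := by
  induction l with
  | nil => exact iff_of_false id (by simp)
  | cons χ l ih =>
    rw [List.exists_mem_cons_iff, ← ih, or_iff_not_imp_left]
    rfl

variable {n d₀ : ℕ} {d : Fin n → ℕ}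

theorem realize_psiPhi (φ : L.Formula ((Σ j : Fin n, Fin (d j)) ⊕ Fin d₀))
    (v : Fin (n + 1) × ((Σ j : Fin n, Fin (d j)) ⊕ Fin d₀) → M) :
    (psiPhi φ).Realize v ↔ ∃ σ, (phiSigma φ σ).Realize v := by
  simp [psiPhi, realize_bigOr]

def partAssignment {P : Fin (n + 1) → Type*} (aY : (j : Fin n) → P j.castSucc → Fin (d j) → M)
    (aX : P (Fin.last n) → Fin d₀ → M) (g : ∀ i, P i) : (Σ j : Fin n, Fin (d j)) ⊕ Fin d₀ → M :=
  Sum.elim (fun p => aY p.1 (g p.1.castSucc) p.2) (aX (g (Fin.last n)))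

theorem realize_phiSigma_partAssignment (φ : L.Formula ((Σ j : Fin n, Fin (d j)) ⊕ Fin d₀))
    (σ : Equiv.Perm (Fin (n + 1))) {P : Fin (n + 1) → Type*}
    (aY : (j : Fin n) → P j.castSucc → Fin (d j) → M) (aX : P (Fin.last n) → Fin d₀ → M)
    (f : Fin (n + 1) → ∀ i, P i) :
    (phiSigma φ σ).Realize (fun p => partAssignment aY aX (f p.1) p.2) ↔
      φ.Realize (partAssignment aY aX fun i => f (σ i) i) := by
  rw [phiSigma, Formula.realize_relabel]
  congr!
  funext p
  rcases p with p | k <;> rfl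

end Symmetrization

theorem psi_encodes_uniform_general {n : ℕ}
    {L : FirstOrder.Language.{x, y}} {M : Type z} [L.Structure M]
    {d₀ : ℕ} {d : Fin n → ℕ} (φ : L.Formula ((Σ j : Fin n, Fin (d j)) ⊕ Fin d₀))
    (H : RandomOrderedPartiteHG.{u} n)
    (aY : (j : Fin n) → H.P j.castSucc → Fin (d j) → M)
    (aX : H.P (Fin.last n) → Fin d₀ → M)
    (hEnc : ∀ g : ∀ i, H.P i,
      ((φ.Realize (Sum.elim
        (fun p : Σ j : Fin n, Fin (d j) => aY p.1 (g p.1.castSucc) p.2)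
        (aX (g (Fin.last n))))) ↔ H.E g)) :
    ∀ G : UniformHG.{u'} n, Finite G.G →
      ∃ b : G.G → ((Σ j : Fin n, Fin (d j)) ⊕ Fin d₀) → M,
        ∀ h : Fin (n + 1) → G.G,
          (((psiPhi φ).Realize fun p => b (h p.1) p.2) ↔ G.R h) := by
  intro G _
  obtain ⟨c, hc⟩ := H.exists_embedding G.R
  refine ⟨fun g => partAssignment aY aX fun i => c (i, g), fun h => ?_⟩
  rw [realize_psiPhi, ← G.exists_perm_comp_iff]
  refine exists_congr fun σ => ?_
  exact (realize_phiSigma_partAssignment φ σ aY aX fun k i => c (i, h k)).trans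
    ((hEnc _).trans (hc (h ∘ σ)))

/-- If a sequence `(a_g)` witnesses that `φ(y₀, …, y_{n-1}, x)` encodes a random
ordered `(n+1)`-partite `(n+1)`-uniform hypergraph in `M` (part `P i` plugged into `y i` for
`i < n`, part `P n` into `x`), then the symmetrization `ψ_φ` encodes every finite
`(n+1)`-uniform hypergraph in `M`. -/
theorem psi_encodes_uniform {n : ℕ} (hn : 1 ≤ n)
    {L : FirstOrder.Language.{x, y}} {M : Type z} [L.Structure M]
    {d₀ : ℕ} {d : Fin n → ℕ} (φ : L.Formula ((Σ j : Fin n, Fin (d j)) ⊕ Fin d₀))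
    (H : RandomOrderedPartiteHG.{u} n)
    (aY : (j : Fin n) → H.P j.castSucc → Fin (d j) → M)
    (aX : H.P (Fin.last n) → Fin d₀ → M)
    (hEnc : ∀ g : ∀ i, H.P i,
      ((φ.Realize (Sum.elim
        (fun p : Σ j : Fin n, Fin (d j) => aY p.1 (g p.1.castSucc) p.2)
        (aX (g (Fin.last n))))) ↔ H.E g)) :
    ∀ G : UniformHG.{u'} n, Finite G.G →
      ∃ b : G.G → ((Σ j : Fin n, Fin (d j)) ⊕ Fin d₀) → M,
        ∀ h : Fin (n + 1) → G.G,
          (((psiPhi φ).Realize fun p => b (h p.1) p.2) ↔ G.R h) :=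
  psi_encodes_uniform_general φ H aY aX hEnc
end
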